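/- For ε ∈ (0, 1], the noisy interventional Fritz expression S_v(ε) = (v/√2)(−2ε² + 4ε − 1)ε² + 2ε² − 3(v/√2)ε² (i.e., the value of S with all CHSH correlators scaled by visibility v ∈ [0,1]) is negative if and only if v > √2 / (1 + (1−ε)²). Equivalently, for fixed ε the minimal visibility for violation is v_min = √2 / (1 + (1−ε)²). -/
import Mathlib


/-- The noisy interventional Fritz expression with visibility v. -/
noncomputable def Sv (v ε : ℝ) : ℝ :=
  (v / Real.sqrt 2) * (-2 * ε ^ 2 + 4 * ε - 1) * ε ^ 2 + 2 * ε ^ 2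
    - 3 * (v / Real.sqrt 2) * ε ^ 2

/-- For ε ∈ (0,1] and v ∈ [0,1], the noisy Fritz expression is negative
iff v > √2 / (1 + (1−ε)²); i.e. v_min = √2 / (1 + (1−ε)²). -/
theorem Sv_neg_iff (ε v : ℝ) (hε0 : 0 < ε) (hε1 : ε ≤ 1)
    (hv0 : 0 ≤ v) (hv1 : v ≤ 1) :
    Sv v ε < 0 ↔ Real.sqrt 2 / (1 + (1 - ε) ^ 2) < v := by
  have hs : (0:ℝ) < Real.sqrt 2 := by positivity
  have hs2 : Real.sqrt 2 * Real.sqrt 2 = 2 := Real.mul_self_sqrt (by norm_num)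
  have hD : (0:ℝ) < 1 + (1 - ε) ^ 2 := by positivity
  have hfac : Sv v ε = ε ^ 2 * (2 - v * Real.sqrt 2 * (1 + (1 - ε) ^ 2)) := by
    unfold Sv
    field_simp
    ring_nf
    rw [Real.sq_sqrt (by norm_num : (0:ℝ) ≤ 2)]; ring
  rw [hfac, div_lt_iff₀ hD]
  have hε2 : (0:ℝ) < ε ^ 2 := by positivity
  constructor
  · intro h
    have h2 : 2 - v * Real.sqrt 2 * (1 + (1 - ε) ^ 2) < 0 := by
      by_contra hc
      push_neg at hc
      nlinarith
    nlinarith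
  · intro h
    have : 2 < v * Real.sqrt 2 * (1 + (1 - ε) ^ 2) := by nlinarith
    nlinarith
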